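/- arXiv:1003.1332 — 2 statements merged into one kernel-verified Lean document; each statement's English description precedes it below -/
import Mathlib

section
/- For the set A = {(t, t·sin(1/t)) : t ∈ ℝ, t ≠ 0} ⊆ ℝ², the upper tangent cone and the lower tangent cone of A at the origin both equal {(h,k) ∈ ℝ² : |k| ≤ |h|}. -/
open Filter Metric Topology

/-- Lower tangent cone: `v ∈ Tan⁻(F,x)` iff `lim_{t→0⁺} (1/t) d(x+t•v,F) = 0`. -/
def lowerTangentCone (F : Set (ℝ × ℝ)) (x : ℝ × ℝ) : Set (ℝ × ℝ) :=
  {v | Filter.Tendsto (fun t : ℝ => t⁻¹ * Metric.infDist (x + t • v) F) (𝓝[>] (0:ℝ)) (𝓝 0)}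

/-- Upper tangent cone: `v ∈ Tan⁺(F,x)` iff `liminf_{t→0⁺} (1/t) d(x+t•v,F) = 0`. -/
def upperTangentCone (F : Set (ℝ × ℝ)) (x : ℝ × ℝ) : Set (ℝ × ℝ) :=
  {v | Filter.liminf (fun t : ℝ => t⁻¹ * Metric.infDist (x + t • v) F) (𝓝[>] (0:ℝ)) = 0}

lemma exists_sin_eq (a y : ℝ) (hy : |y| ≤ 1) :
    ∃ θ ∈ Set.Icc a (a + 2 * Real.pi), Real.sin θ = y := by
  obtain ⟨hy1, hy2⟩ := abs_le.mp hy
  have hπ := Real.pi_pos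
  set x := (a - Real.arcsin y) / (2 * Real.pi) with hx
  refine ⟨Real.arcsin y + (⌈x⌉ : ℝ) * (2 * Real.pi), ⟨?_, ?_⟩, ?_⟩
  · have h1 := Int.le_ceil x
    rw [hx, div_le_iff₀ (by positivity)] at h1
    linarith
  · have h2 := Int.ceil_lt_add_one x
    have h2' : (⌈x⌉ : ℝ) * (2 * Real.pi) < (x + 1) * (2 * Real.pi) :=
      mul_lt_mul_of_pos_right h2 (by positivity)
    rw [hx, add_mul, div_mul_cancel₀ _ (by positivity)] at h2'
    linarith
  · rw [Real.sin_add_int_mul_two_pi]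
    exact Real.sin_arcsin hy1 hy2

lemma exists_point (c y : ℝ) (hc : c ≠ 0) (hy : |y| ≤ 1) :
    ∃ s : ℝ, s ≠ 0 ∧ Real.sin (1 / s) = y ∧ |s - c| ≤ 2 * Real.pi * c ^ 2 := by
  have hπ := Real.pi_pos
  rcases hc.lt_or_gt with hneg | hpos
  · -- c < 0 : take θ ∈ [1/c - 2π, 1/c]
    obtain ⟨θ, ⟨hθ1, hθ2⟩, hsin⟩ := exists_sin_eq (1 / c - 2 * Real.pi) y hy
    rw [sub_add_cancel] at hθ2
    have hc1 : 1 / c < 0 := by exact one_div_neg.mpr hneg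
    have hθ0 : θ < 0 := lt_of_le_of_lt hθ2 hc1
    have hθne : θ ≠ 0 := ne_of_lt hθ0
    refine ⟨1 / θ, one_div_ne_zero hθne, by rw [one_div_one_div]; exact hsin, ?_⟩
    have hA : c ≤ 1 / θ := by
      have := one_div_le_one_div_of_neg_of_le hc1 hθ2
      rwa [one_div_one_div] at this
    have hxc : (1 / θ) * c ≤ c ^ 2 := by nlinarith
    have key : 1 / θ - c = (1 / c - θ) * ((1 / θ) * c) := by
      field_simp
    rw [abs_le]
    constructor
    · nlinarith
    · rw [key]
      have h1 : 1 / c - θ ≤ 2 * Real.pi := by linarith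
      have h1θ : 1 / θ < 0 := one_div_neg.mpr hθ0
      have h2 : 0 ≤ (1 / θ) * c := le_of_lt (mul_pos_of_neg_of_neg h1θ hneg)
      calc (1 / c - θ) * ((1 / θ) * c) ≤ (2 * Real.pi) * (c ^ 2) :=
            mul_le_mul h1 hxc h2 (by positivity)
        _ = 2 * Real.pi * c ^ 2 := by ring
  · -- c > 0 : take θ ∈ [1/c, 1/c + 2π]
    obtain ⟨θ, ⟨hθ1, hθ2⟩, hsin⟩ := exists_sin_eq (1 / c) y hy
    have hc1 : 0 < 1 / c := by positivity
    have hθ0 : 0 < θ := lt_of_lt_of_le hc1 hθ1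
    have hθne : θ ≠ 0 := ne_of_gt hθ0
    refine ⟨1 / θ, one_div_ne_zero hθne, by rw [one_div_one_div]; exact hsin, ?_⟩
    have hA : 1 / θ ≤ c := by
      have := one_div_le_one_div_of_le hc1 hθ1
      rwa [one_div_one_div] at this
    have hxc : (1 / θ) * c ≤ c ^ 2 := by nlinarith
    have key : c - 1 / θ = (θ - 1 / c) * ((1 / θ) * c) := by
      field_simp
    rw [abs_le]
    constructor
    · have h1 : θ - 1 / c ≤ 2 * Real.pi := by linarith
      have h2 : 0 ≤ (1 / θ) * c := by positivity
      have := calc (θ - 1 / c) * ((1 / θ) * c) ≤ (2 * Real.pi) * (c ^ 2) :=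
            mul_le_mul h1 hxc h2 (by positivity)
        _ = 2 * Real.pi * c ^ 2 := by ring
      linarith [key ▸ this]
    · nlinarith

theorem tangentCones_tsin_one_div_t :
    let A : Set (ℝ × ℝ) := {p | ∃ t : ℝ, t ≠ 0 ∧ p = (t, t * Real.sin (1 / t))}
    upperTangentCone A (0, 0) = {p : ℝ × ℝ | |p.2| ≤ |p.1|} ∧
    lowerTangentCone A (0, 0) = {p : ℝ × ℝ | |p.2| ≤ |p.1|} := by
  intro A
  have hπ := Real.pi_pos
  have hAne : A.Nonempty := ⟨(1, 1 * Real.sin (1/1)), 1, one_ne_zero, rfl⟩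
  -- the point evaluation
  have hpt : ∀ (t h k : ℝ), ((0:ℝ), (0:ℝ)) + t • ((h, k) : ℝ × ℝ) = (t * h, t * k) := by
    intro t h k
    simp [Prod.smul_def, smul_eq_mul]
  -- origin in closure of A
  have hclos : Metric.infDist ((0:ℝ), (0:ℝ)) A = 0 := by
    apply Metric.infDist_zero_of_mem_closure
    have hmem : ∀ n : ℕ, ((((n:ℝ)+1) * Real.pi)⁻¹, (0:ℝ)) ∈ A := by
      intro n
      refine ⟨(((n:ℝ)+1) * Real.pi)⁻¹, by positivity, ?_⟩
      have : (1:ℝ) / ((((n:ℝ)+1) * Real.pi)⁻¹) = ((n:ℝ)+1) * Real.pi := by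
        rw [one_div, inv_inv]
      rw [this]
      have : Real.sin (((n:ℝ)+1) * Real.pi) = 0 := by
        have := Real.sin_nat_mul_pi (n+1)
        push_cast at this ⊢
        exact this
      rw [this, mul_zero]
    have htend : Tendsto (fun n : ℕ => (((((n:ℝ)+1) * Real.pi)⁻¹, (0:ℝ)) : ℝ × ℝ))
        atTop (𝓝 ((0:ℝ), (0:ℝ))) := by
      apply Tendsto.prodMk_nhds _ tendsto_const_nhds
      apply Tendsto.inv_tendsto_atTop
      have h1 : Tendsto (fun n : ℕ => ((n:ℝ)+1)) atTop atTop :=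
        tendsto_atTop_add_const_right atTop 1 tendsto_natCast_atTop_atTop
      exact h1.atTop_mul_const hπ
    exact mem_closure_of_tendsto htend (Eventually.of_forall hmem)
  -- S ⊆ lower tangent cone
  have hSlow : {p : ℝ × ℝ | |p.2| ≤ |p.1|} ⊆ lowerTangentCone A (0, 0) := by
    rintro ⟨h, k⟩ hv
    simp only [Set.mem_setOf_eq] at hv
    rcases eq_or_ne h 0 with rfl | hh
    · -- h = 0, so k = 0
      have hk : k = 0 := by simpa using hv
      subst hk
      simp only [lowerTangentCone, Set.mem_setOf_eq]
      have heq : (fun t : ℝ => t⁻¹ * Metric.infDist (((0:ℝ),(0:ℝ)) + t • (((0:ℝ),(0:ℝ)) : ℝ × ℝ)) A)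
          = fun _ : ℝ => (0:ℝ) := by
        funext t
        rw [hpt]
        simp only [mul_zero]
        rw [hclos, mul_zero]
      rw [heq]
      exact tendsto_const_nhds
    · -- h ≠ 0
      have hyk : |k / h| ≤ 1 := by
        rw [abs_div, div_le_one (abs_pos.mpr hh)]
        exact hv
      simp only [lowerTangentCone, Set.mem_setOf_eq]
      have hbound : ∀ t : ℝ, 0 < t →
          t⁻¹ * Metric.infDist (((0:ℝ),(0:ℝ)) + t • ((h:ℝ),(k:ℝ))) A ≤ 2 * Real.pi * h ^ 2 * t := by
        intro t ht
        rw [hpt]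
        have hth : t * h ≠ 0 := mul_ne_zero (ne_of_gt ht) hh
        obtain ⟨s, hs0, hssin, hsdist⟩ := exists_point (t * h) (k / h) hth hyk
        have hqA : ((s, s * (k/h)) : ℝ × ℝ) ∈ A := ⟨s, hs0, by rw [hssin]⟩
        have hd : dist ((t*h, t*k) : ℝ × ℝ) (s, s * (k/h)) ≤ 2 * Real.pi * (t*h)^2 := by
          rw [Prod.dist_eq]
          dsimp only
          apply max_le
          · rw [Real.dist_eq]
            have : |t*h - s| = |s - t*h| := abs_sub_comm _ _
            rw [this]
            exact hsdist
          · rw [Real.dist_eq]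
            have heq : t*k - s*(k/h) = (t*h - s) * (k/h) := by
              field_simp
            rw [heq, abs_mul]
            calc |t*h - s| * |k/h| ≤ |t*h - s| * 1 :=
                  mul_le_mul_of_nonneg_left hyk (abs_nonneg _)
              _ = |t*h - s| := mul_one _
              _ = |s - t*h| := abs_sub_comm _ _
              _ ≤ 2 * Real.pi * (t*h)^2 := hsdist
        have hinf : Metric.infDist ((t*h, t*k) : ℝ × ℝ) A ≤ 2 * Real.pi * (t*h)^2 :=
          le_trans (Metric.infDist_le_dist_of_mem hqA) hd
        calc t⁻¹ * Metric.infDist ((t*h, t*k) : ℝ × ℝ) A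
            ≤ t⁻¹ * (2 * Real.pi * (t*h)^2) := by
              apply mul_le_mul_of_nonneg_left hinf (by positivity)
          _ = 2 * Real.pi * h ^ 2 * t := by
              field_simp
      have hg : Tendsto (fun t : ℝ => 2 * Real.pi * h ^ 2 * t) (𝓝[>] (0:ℝ)) (𝓝 0) := by
        have : Tendsto (fun t : ℝ => 2 * Real.pi * h ^ 2 * t) (𝓝 (0:ℝ)) (𝓝 (2 * Real.pi * h ^ 2 * 0)) :=
          (continuous_const.mul continuous_id).tendsto 0
        rw [mul_zero] at this
        exact this.mono_left nhdsWithin_le_nhds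
      apply squeeze_zero'
      · filter_upwards [self_mem_nhdsWithin] with t ht
        have ht' : (0:ℝ) < t := ht
        exact mul_nonneg (inv_nonneg.mpr ht'.le) Metric.infDist_nonneg
      · filter_upwards [self_mem_nhdsWithin] with t ht
        exact hbound t ht
      · exact hg
  -- lower ⊆ upper
  have hlu : lowerTangentCone A (0, 0) ⊆ upperTangentCone A (0, 0) := by
    intro v hv
    exact hv.liminf_eq
  -- upper ⊆ S
  have hupS : upperTangentCone A (0, 0) ⊆ {p : ℝ × ℝ | |p.2| ≤ |p.1|} := by
    rintro ⟨h, k⟩ hv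
    simp only [upperTangentCone, Set.mem_setOf_eq] at hv
    simp only [Set.mem_setOf_eq]
    by_contra hlt
    push_neg at hlt
    set c₀ := (|k| - |h|) / 2 with hc₀
    have hc₀pos : 0 < c₀ := by simp only [hc₀]; linarith
    have hlow : ∀ t : ℝ, 0 < t →
        c₀ ≤ t⁻¹ * Metric.infDist (((0:ℝ),(0:ℝ)) + t • ((h:ℝ),(k:ℝ))) A := by
      intro t ht
      rw [hpt]
      have hinf : t * c₀ ≤ Metric.infDist ((t*h, t*k) : ℝ × ℝ) A := by
        apply le_of_not_gt
        intro hcon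
        obtain ⟨q, hqA, hq⟩ := (Metric.infDist_lt_iff hAne).mp hcon
        obtain ⟨s, hs0, rfl⟩ := hqA
        rw [Prod.dist_eq] at hq
        dsimp only at hq
        have h1 : dist (t*h) s < t * c₀ := lt_of_le_of_lt (le_max_left _ _) hq
        have h2 : dist (t*k) (s * Real.sin (1/s)) < t * c₀ := lt_of_le_of_lt (le_max_right _ _) hq
        rw [Real.dist_eq] at h1 h2
        have hsinb : |s * Real.sin (1/s)| ≤ |s| := by
          rw [abs_mul]
          calc |s| * |Real.sin (1/s)| ≤ |s| * 1 :=
                mul_le_mul_of_nonneg_left (Real.abs_sin_le_one _) (abs_nonneg _)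
            _ = |s| := mul_one _
        have e1 : |s| - |t*h| ≤ |t*h - s| := by
          have := abs_sub_abs_le_abs_sub s (t*h)
          rw [abs_sub_comm s (t*h)] at this
          linarith
        have e2 : |t*k| - |s * Real.sin (1/s)| ≤ |t*k - s * Real.sin (1/s)| :=
          abs_sub_abs_le_abs_sub _ _
        have hth : |t*h| = t * |h| := by rw [abs_mul, abs_of_pos ht]
        have htk : |t*k| = t * |k| := by rw [abs_mul, abs_of_pos ht]
        have : t * |k| - t * |h| < 2 * (t * c₀) := by
          have := hsinb
          nlinarith
        simp only [hc₀] at this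
        nlinarith
      calc c₀ = t⁻¹ * (t * c₀) := by field_simp
        _ ≤ t⁻¹ * Metric.infDist ((t*h, t*k) : ℝ × ℝ) A := by
            apply mul_le_mul_of_nonneg_left hinf (by positivity)
    have hub : ∀ t : ℝ, 0 < t →
        t⁻¹ * Metric.infDist (((0:ℝ),(0:ℝ)) + t • ((h:ℝ),(k:ℝ))) A ≤ max |h| |k| := by
      intro t ht
      rw [hpt]
      have hd : Metric.infDist ((t*h, t*k) : ℝ × ℝ) A ≤ t * max |h| |k| := by
        calc Metric.infDist ((t*h, t*k) : ℝ × ℝ) A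
            ≤ Metric.infDist ((0,0) : ℝ × ℝ) A + dist ((t*h, t*k) : ℝ × ℝ) ((0,0) : ℝ × ℝ) :=
              Metric.infDist_le_infDist_add_dist
          _ = dist ((t*h, t*k) : ℝ × ℝ) ((0,0) : ℝ × ℝ) := by rw [hclos, zero_add]
          _ ≤ t * max |h| |k| := by
              rw [Prod.dist_eq]
              dsimp only
              apply max_le
              · rw [Real.dist_eq, sub_zero, abs_mul, abs_of_pos ht]
                exact mul_le_mul_of_nonneg_left (le_max_left _ _) (le_of_lt ht)
              · rw [Real.dist_eq, sub_zero, abs_mul, abs_of_pos ht]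
                exact mul_le_mul_of_nonneg_left (le_max_right _ _) (le_of_lt ht)
      calc t⁻¹ * Metric.infDist ((t*h, t*k) : ℝ × ℝ) A ≤ t⁻¹ * (t * max |h| |k|) :=
            mul_le_mul_of_nonneg_left hd (by positivity)
        _ = max |h| |k| := by field_simp
    have hcob : IsCoboundedUnder (· ≥ ·) (𝓝[>] (0:ℝ))
        (fun t : ℝ => t⁻¹ * Metric.infDist (((0:ℝ),(0:ℝ)) + t • ((h:ℝ),(k:ℝ))) A) := by
      apply Filter.IsBoundedUnder.isCoboundedUnder_ge
      apply Filter.isBoundedUnder_of_eventually_le (a := max |h| |k|)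
      filter_upwards [self_mem_nhdsWithin] with t ht
      exact hub t ht
    have : c₀ ≤ Filter.liminf
        (fun t : ℝ => t⁻¹ * Metric.infDist (((0:ℝ),(0:ℝ)) + t • ((h:ℝ),(k:ℝ))) A) (𝓝[>] (0:ℝ)) := by
      apply Filter.le_liminf_of_le hcob
      filter_upwards [self_mem_nhdsWithin] with t ht
      exact hlow t ht
    rw [hv] at this
    linarith
  constructor
  · exact Set.Subset.antisymm hupS (fun v hv => hlu (hSlow hv))
  · exact Set.Subset.antisymm (fun v hv => hupS (hlu hv)) hSlow
end

section
/- For the set B = {(t,-t) : t < 0} ∪ {(1/n, 1/n) : n ∈ ℕ, n ≥ 1} ⊆ ℝ², the upper tangent cone and the lower tangent cone of B at the origin both equal {(t, |t|) : t ∈ ℝ}. -/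
/-!
Every point of `B` lies on the graph `G = {(t, |t|)}` of the absolute value, a closed cone, so
`d(t • v, B) ≥ d(t • v, G) = t · d(v, G)`, which rules out every `v ∉ G` from the upper tangent cone.
Conversely, for `v = (a, |a|)` with `a ≤ 0` the ray `t • v` stays in `closure B`, and for `a > 0`
the point `t • v = (s, s)` with `s = t a` lies within `s²` of some `(1/n, 1/n)` (take `n = ⌈1/s⌉`);
hence `d(t • v, B) = O(t²)` and `v` lies in the lower tangent cone, which is contained in the
upper one.
-/

open Filter Metric Topology

open scoped Pointwise

section TangentCones

variable {F : Set (ℝ × ℝ)} {x v : ℝ × ℝ}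

theorem lowerTangentCone_subset_upperTangentCone (F : Set (ℝ × ℝ)) (x : ℝ × ℝ) :
    lowerTangentCone F x ⊆ upperTangentCone F x :=
  fun _ hv => hv.liminf_eq

theorem mem_lowerTangentCone_of_infDist_le_sq {C : ℝ}
    (h : ∀ᶠ t in 𝓝[>] (0 : ℝ), infDist (x + t • v) F ≤ C * t ^ 2) :
    v ∈ lowerTangentCone F x := by
  have hlin : Tendsto (fun t : ℝ => C * t) (𝓝[>] 0) (𝓝 0) :=
    tendsto_nhdsWithin_of_tendsto_nhds ((continuous_const.mul continuous_id).tendsto' 0 0 (by simp))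
  refine squeeze_zero' ?_ ?_ hlin
  · filter_upwards [self_mem_nhdsWithin] with t ht
    exact mul_nonneg (inv_nonneg.2 (le_of_lt ht)) infDist_nonneg
  · filter_upwards [self_mem_nhdsWithin, h] with t ht hle
    have ht : 0 < t := ht
    calc t⁻¹ * infDist (x + t • v) F ≤ t⁻¹ * (C * t ^ 2) := by gcongr
      _ = C * t := by field_simp

theorem infDist_add_smul_le (hx : x ∈ closure F) {t : ℝ} (ht : 0 ≤ t) :
    infDist (x + t • v) F ≤ t * ‖v‖ :=
  calc infDist (x + t • v) F ≤ infDist x F + dist (x + t • v) x := infDist_le_infDist_add_dist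
    _ = t * ‖v‖ := by
      rw [infDist_zero_of_mem_closure hx, dist_self_add_left, norm_smul, Real.norm_of_nonneg ht,
        zero_add]

/-- The upper bound `d(x + t • v, F) ≤ t ‖v‖` is what keeps the `liminf` from taking its junk
value `0` on an unbounded function. -/
theorem le_liminf_of_le_infDist (hx : x ∈ closure F) {c : ℝ}
    (h : ∀ᶠ t in 𝓝[>] (0 : ℝ), c * t ≤ infDist (x + t • v) F) :
    c ≤ liminf (fun t : ℝ => t⁻¹ * infDist (x + t • v) F) (𝓝[>] 0) := by
  refine le_liminf_of_le (isBoundedUnder_of_eventually_le (a := ‖v‖) ?_).isCoboundedUnder_ge ?_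
  · filter_upwards [self_mem_nhdsWithin] with t ht
    rw [inv_mul_le_iff₀ ht]
    exact infDist_add_smul_le hx (le_of_lt ht)
  · filter_upwards [self_mem_nhdsWithin, h] with t ht hle
    rwa [le_inv_mul_iff₀ ht, mul_comm]

theorem upperTangentCone_zero_subset_of_subset_cone {K : Set (ℝ × ℝ)}
    (h0 : (0 : ℝ × ℝ) ∈ closure F) (hFK : F ⊆ K) (hK : IsClosed K)
    (hcone : ∀ t : ℝ, 0 < t → t • K = K) : upperTangentCone F 0 ⊆ K := by
  intro v hv
  by_contra hvK
  have hF : F.Nonempty := closure_nonempty_iff.1 ⟨0, h0⟩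
  have hpos : 0 < infDist v K := (hK.notMem_iff_infDist_pos (hF.mono hFK)).1 hvK
  have hle : ∀ᶠ t in 𝓝[>] (0 : ℝ), infDist v K * t ≤ infDist (0 + t • v) F := by
    filter_upwards [self_mem_nhdsWithin] with t ht
    have ht : 0 < t := ht
    calc infDist v K * t = infDist (t • v) (t • K) := by
          rw [infDist_smul₀ ht.ne', Real.norm_of_nonneg ht.le, mul_comm]
      _ = infDist (t • v) K := by rw [hcone t ht]
      _ ≤ infDist (0 + t • v) F := by
          rw [zero_add]
          exact infDist_le_infDist_of_subset hFK hF
  have := le_liminf_of_le_infDist h0 hle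
  rw [show liminf _ _ = (0 : ℝ) from hv] at this
  linarith

end TangentCones

def exampleSet : Set (ℝ × ℝ) :=
  {p | ∃ t : ℝ, t < 0 ∧ p = (t, -t)} ∪ {p | ∃ n : ℕ, 1 ≤ n ∧ p = ((1 : ℝ) / n, (1 : ℝ) / n)}

def absGraph : Set (ℝ × ℝ) := {p | ∃ t : ℝ, p = (t, |t|)}

theorem mem_absGraph_iff {p : ℝ × ℝ} : p ∈ absGraph ↔ p.2 = |p.1| := by
  constructor
  · rintro ⟨t, rfl⟩
    rfl
  · intro h
    exact ⟨p.1, Prod.ext rfl h⟩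

theorem isClosed_absGraph : IsClosed absGraph := by
  have : absGraph = {p : ℝ × ℝ | p.2 = |p.1|} := Set.ext fun _ => mem_absGraph_iff
  rw [this]
  exact isClosed_eq continuous_snd (continuous_abs.comp continuous_fst)

theorem smul_absGraph {t : ℝ} (ht : 0 < t) : t • absGraph = absGraph := by
  ext p
  rw [Set.mem_smul_set_iff_inv_smul_mem₀ ht.ne', mem_absGraph_iff, mem_absGraph_iff]
  simp [abs_mul, abs_of_pos ht, ht.ne']

theorem exampleSet_subset_absGraph : exampleSet ⊆ absGraph := by
  rintro p (⟨t, ht, rfl⟩ | ⟨n, -, rfl⟩)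
  · exact ⟨t, by rw [abs_of_neg ht]⟩
  · exact ⟨1 / n, by rw [abs_of_nonneg (by positivity)]⟩

theorem zero_mem_closure_exampleSet : (0 : ℝ × ℝ) ∈ closure exampleSet := by
  have h : Tendsto (fun n : ℕ => ((1 / ((n : ℝ) + 1), 1 / ((n : ℝ) + 1)) : ℝ × ℝ)) atTop (𝓝 0) :=
    tendsto_one_div_add_atTop_nhds_zero_nat.prodMk_nhds tendsto_one_div_add_atTop_nhds_zero_nat
  refine mem_closure_of_tendsto h (Eventually.of_forall fun n => ?_)
  exact Or.inr ⟨n + 1, by omega, by push_cast; rfl⟩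

theorem exists_abs_sub_one_div_nat_le_sq {s : ℝ} (hs0 : 0 < s) :
    ∃ n : ℕ, 1 ≤ n ∧ |s - 1 / (n : ℝ)| ≤ s ^ 2 := by
  refine ⟨⌈1 / s⌉₊, Nat.one_le_ceil_iff.2 (by positivity), ?_⟩
  set N : ℝ := (⌈1 / s⌉₊ : ℝ)
  have hN1 : 1 / s ≤ N := Nat.le_ceil _
  have hN2 : N < 1 / s + 1 := Nat.ceil_lt_add_one (by positivity)
  have hN : 0 < N := lt_of_lt_of_le (by positivity) hN1
  have hinv : 1 / N ≤ s := by rw [div_le_comm₀ hN hs0]; exact hN1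
  have hsN : s * N - 1 ≤ s := by
    have := mul_lt_mul_of_pos_left hN2 hs0
    rw [mul_add, mul_one_div_cancel hs0.ne', mul_one] at this
    linarith
  refine abs_le.2 ⟨by nlinarith, ?_⟩
  calc s - 1 / N = (s * N - 1) / N := by field_simp
    _ ≤ s / N := by gcongr
    _ = s * (1 / N) := by ring
    _ ≤ s ^ 2 := by rw [sq]; gcongr

theorem infDist_smul_exampleSet_le {t : ℝ} (ht : 0 < t) (a : ℝ) :
    infDist (t • (a, |a|)) exampleSet ≤ a ^ 2 * t ^ 2 := by
  rcases lt_trichotomy a 0 with ha | rfl | ha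
  · have hmem : t • (a, |a|) ∈ exampleSet :=
      Or.inl ⟨t * a, mul_neg_of_pos_of_neg ht ha, by simp [abs_of_neg ha]⟩
    rw [infDist_zero_of_mem hmem]
    positivity
  · rw [abs_zero, Prod.mk_zero_zero, smul_zero,
      infDist_zero_of_mem_closure zero_mem_closure_exampleSet]
    positivity
  · obtain ⟨n, hn, hclose⟩ := exists_abs_sub_one_div_nat_le_sq (mul_pos ht ha)
    calc infDist (t • (a, |a|)) exampleSet ≤ dist (t • (a, |a|)) ((1 : ℝ) / n, (1 : ℝ) / n) :=
          infDist_le_dist_of_mem (Or.inr ⟨n, hn, rfl⟩)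
      _ = |t * a - 1 / n| := by simp [abs_of_pos ha, Prod.dist_eq, Real.dist_eq]
      _ ≤ a ^ 2 * t ^ 2 := by rw [← mul_pow, mul_comm a]; exact hclose

theorem absGraph_subset_lowerTangentCone : absGraph ⊆ lowerTangentCone exampleSet 0 := by
  rintro _ ⟨a, rfl⟩
  refine mem_lowerTangentCone_of_infDist_le_sq (C := a ^ 2) ?_
  filter_upwards [self_mem_nhdsWithin] with t ht
  rw [zero_add]
  exact infDist_smul_exampleSet_le ht a

theorem tangentCones_aubin_frankowska_example :
    let B : Set (ℝ × ℝ) :=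
      {p | ∃ t : ℝ, t < 0 ∧ p = (t, -t)} ∪
      {p | ∃ n : ℕ, 1 ≤ n ∧ p = ((1 : ℝ) / n, (1 : ℝ) / n)}
    upperTangentCone B (0, 0) = {p : ℝ × ℝ | ∃ t : ℝ, p = (t, |t|)} ∧
    lowerTangentCone B (0, 0) = {p : ℝ × ℝ | ∃ t : ℝ, p = (t, |t|)} := by
  change upperTangentCone exampleSet 0 = absGraph ∧ lowerTangentCone exampleSet 0 = absGraph
  have hupper : upperTangentCone exampleSet 0 ⊆ absGraph :=
    upperTangentCone_zero_subset_of_subset_cone zero_mem_closure_exampleSet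
      exampleSet_subset_absGraph isClosed_absGraph fun _ => smul_absGraph
  have hlu := lowerTangentCone_subset_upperTangentCone exampleSet 0
  exact ⟨hupper.antisymm (absGraph_subset_lowerTangentCone.trans hlu),
    (hlu.trans hupper).antisymm absGraph_subset_lowerTangentCone⟩
end
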